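/- The function φ(t, ω) = φ₀(F̄(t) ⊙ ω) · exp(−½ Σᵢ ωᵢ² Ḡᵢ(t)²), where F̄ᵢ(t) = exp(∫₀ᵗ fᵢ(s)ds) and Ḡᵢ(t)² = F̄ᵢ(t)² ∫₀ᵗ gᵢ(s)²/F̄ᵢ(s)² ds, solves ∂ₜφ = Σᵢ ωᵢ fᵢ(t) ∂_{ωᵢ}φ − ½ (Σᵢ ωᵢ² gᵢ(t)²) φ with initial condition φ(0, ·) = φ₀. -/

import Mathlib

/-!
The ansatz is `φ₀` dilated by `F̄(t)` times a centred Gaussian with variances `Ḡ(t)²`. Its time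
derivative and its derivative along the field `ω ↦ f(t) ⊙ ω` are both instances of one chain-rule
computation for `φ₀(a ⊙ w) · exp(−½ Σᵢ bᵢ wᵢ²)` along a curve in `(a, b, w)`. Since `F̄' = f ⊙ F̄`
and `(Ḡ²)' = 2 f ⊙ Ḡ² + g²`, the two derivatives differ exactly by `−½ Σᵢ ωᵢ² gᵢ² φ`, the
contribution of `g²` to the variance equation.
-/

open MeasureTheory Real intervalIntegral

/-- Complex partial derivative `∂_{ωᵢ} φ` for `φ : (Fin D → ℝ) → ℂ`. -/
noncomputable def pderivC {D : ℕ} (φ : (Fin D → ℝ) → ℂ) (i : Fin D) (ω : Fin D → ℝ) : ℂ :=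
  fderiv ℝ φ ω (Pi.single i 1)

theorem hasDerivAt_exp_integral {f : ℝ → ℝ} (hf : Continuous f) (a t : ℝ) :
    HasDerivAt (fun u => Real.exp (∫ s in a..u, f s)) (f t * Real.exp (∫ s in a..t, f s)) t := by
  rw [mul_comm]
  exact (hf.integral_hasStrictDerivAt a t).hasDerivAt.exp

theorem hasDerivAt_sq_mul_integral_div_sq {F f h : ℝ → ℝ} (hF : ∀ t, HasDerivAt F (f t * F t) t)
    (hF₀ : ∀ t, F t ≠ 0) (hh : Continuous h) (a t : ℝ) :
    HasDerivAt (fun u => F u ^ 2 * ∫ s in a..u, h s / F s ^ 2)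
      (2 * f t * (F t ^ 2 * ∫ s in a..t, h s / F s ^ 2) + h t) t := by
  have hFc : Continuous F := continuous_iff_continuousAt.2 fun s => (hF s).continuousAt
  have hc : Continuous fun s => h s / F s ^ 2 :=
    hh.div (hFc.pow 2) fun s => pow_ne_zero 2 (hF₀ s)
  refine (((hF t).fun_pow 2).fun_mul (hc.integral_hasStrictDerivAt a t).hasDerivAt).congr_deriv ?_
  field_simp [hF₀ t]
  ring

section

variable {D : ℕ}

theorem sum_mul_pderivC (ψ : (Fin D → ℝ) → ℂ) (ω v : Fin D → ℝ) :
    ∑ i, (v i : ℂ) * pderivC ψ i ω = fderiv ℝ ψ ω v := by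
  conv_rhs => rw [← Finset.univ_sum_single v]
  simp only [map_sum, pderivC]
  refine Finset.sum_congr rfl fun i _ => ?_
  rw [← Complex.real_smul, ← map_smul, ← Pi.single_smul', smul_eq_mul, mul_one]

noncomputable def gaussDamping (b w : Fin D → ℝ) : ℂ :=
  Complex.exp (-(1 / 2 : ℂ) * ((∑ i, w i ^ 2 * b i : ℝ) : ℂ))

noncomputable def dampedDilation (φ₀ : (Fin D → ℝ) → ℂ) (a b w : Fin D → ℝ) : ℂ :=
  φ₀ (fun i => a i * w i) * gaussDamping b w

theorem hasDerivAt_gaussDamping_comp {b w : ℝ → Fin D → ℝ} {b' w' : Fin D → ℝ} {t : ℝ}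
    (hb : HasDerivAt b b' t) (hw : HasDerivAt w w' t) :
    HasDerivAt (fun s => gaussDamping (b s) (w s))
      (-(1 / 2 : ℂ) * ((∑ i, (2 * w t i * w' i * b t i + w t i ^ 2 * b' i) : ℝ) : ℂ) *
        gaussDamping (b t) (w t)) t := by
  rw [hasDerivAt_pi] at hb hw
  have hq : HasDerivAt (fun s => ∑ i, w s i ^ 2 * b s i)
      (∑ i, (2 * w t i * w' i * b t i + w t i ^ 2 * b' i)) t := by
    refine HasDerivAt.fun_sum fun i _ => ?_
    refine (((hw i).fun_pow 2).fun_mul (hb i)).congr_deriv ?_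
    ring
  rw [mul_comm]
  exact (hq.ofReal_comp.const_mul _).cexp

theorem hasDerivAt_dampedDilation_comp {φ₀ : (Fin D → ℝ) → ℂ} {a b w : ℝ → Fin D → ℝ}
    {a' b' w' : Fin D → ℝ} {t : ℝ} (hφ₀ : DifferentiableAt ℝ φ₀ (fun i => a t i * w t i))
    (ha : HasDerivAt a a' t) (hb : HasDerivAt b b' t) (hw : HasDerivAt w w' t) :
    HasDerivAt (fun s => dampedDilation φ₀ (a s) (b s) (w s))
      (fderiv ℝ φ₀ (fun i => a t i * w t i) (fun i => a' i * w t i + a t i * w' i) *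
          gaussDamping (b t) (w t) -
        (1 / 2 : ℂ) * ((∑ i, (2 * w t i * w' i * b t i + w t i ^ 2 * b' i) : ℝ) : ℂ) *
          dampedDilation φ₀ (a t) (b t) (w t)) t := by
  have hp : HasDerivAt (fun s i => a s i * w s i) (fun i => a' i * w t i + a t i * w' i) t := by
    rw [hasDerivAt_pi] at ha hw ⊢
    exact fun i => (ha i).fun_mul (hw i)
  refine ((hφ₀.hasFDerivAt.comp_hasDerivAt t hp).fun_mul
    (hasDerivAt_gaussDamping_comp hb hw)).congr_deriv ?_
  simp only [dampedDilation]
  ring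

theorem hasDerivAt_dampedDilation_param {φ₀ : (Fin D → ℝ) → ℂ} {a b : ℝ → Fin D → ℝ}
    {a' b' ω : Fin D → ℝ} {t : ℝ} (hφ₀ : DifferentiableAt ℝ φ₀ (fun i => a t i * ω i))
    (ha : HasDerivAt a a' t) (hb : HasDerivAt b b' t) :
    HasDerivAt (fun s => dampedDilation φ₀ (a s) (b s) ω)
      (fderiv ℝ φ₀ (fun i => a t i * ω i) (fun i => a' i * ω i) * gaussDamping (b t) ω -
        (1 / 2 : ℂ) * ((∑ i, ω i ^ 2 * b' i : ℝ) : ℂ) * dampedDilation φ₀ (a t) (b t) ω) t := by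
  simpa using hasDerivAt_dampedDilation_comp hφ₀ ha hb (hasDerivAt_const t ω)

theorem fderiv_dampedDilation_apply {φ₀ : (Fin D → ℝ) → ℂ} (hφ₀ : Differentiable ℝ φ₀)
    (a b ω v : Fin D → ℝ) :
    fderiv ℝ (dampedDilation φ₀ a b) ω v =
      fderiv ℝ φ₀ (fun i => a i * ω i) (fun i => a i * v i) * gaussDamping b ω -
        (1 / 2 : ℂ) * ((∑ i, 2 * ω i * v i * b i : ℝ) : ℂ) * dampedDilation φ₀ a b ω := by
  have hdiff : Differentiable ℝ (dampedDilation φ₀ a b) := by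
    unfold dampedDilation gaussDamping; fun_prop
  have hline : HasDerivAt (fun s : ℝ => ω + s • v) v 0 := by
    simpa using ((hasDerivAt_id (0 : ℝ)).smul_const v).const_add ω
  refine ((hdiff ω).hasFDerivAt.hasLineDerivAt v).unique ?_
  simpa [HasLineDerivAt] using hasDerivAt_dampedDilation_comp (hφ₀ _) (hasDerivAt_const 0 a)
    (hasDerivAt_const 0 b) hline

end

/-- Method-of-characteristics solution of the Fourier-domain
Fokker–Planck equation. With `F̄ᵢ(t) = exp(∫₀ᵗ fᵢ)` and
`Ḡᵢ(t)² = F̄ᵢ(t)² ∫₀ᵗ gᵢ²/F̄ᵢ²`, the function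
`φ(t,ω) = φ₀(F̄(t) ⊙ ω) exp(−½ Σᵢ ωᵢ² Ḡᵢ(t)²)` solves
`∂ₜφ = Σᵢ ωᵢ fᵢ ∂_{ωᵢ}φ − ½ (Σᵢ ωᵢ² gᵢ²) φ` with `φ(0,·) = φ₀`. -/
theorem characteristics_solution {D : ℕ} (f g : Fin D → ℝ → ℝ)
    (hf : ∀ i, Continuous (f i)) (hg : ∀ i, Continuous (g i))
    (φ₀ : (Fin D → ℝ) → ℂ) (hφ₀ : ContDiff ℝ 1 φ₀)
    (Fb G2 : Fin D → ℝ → ℝ)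
    (hFb : ∀ i t, Fb i t = Real.exp (∫ s in (0:ℝ)..t, f i s))
    (hG2 : ∀ i t, G2 i t = (Fb i t) ^ 2 * ∫ s in (0:ℝ)..t, (g i s) ^ 2 / (Fb i s) ^ 2)
    (φ : ℝ → (Fin D → ℝ) → ℂ)
    (hφ : ∀ t ω, φ t ω = φ₀ (fun i => Fb i t * ω i) *
      Complex.exp (-(1 / 2 : ℂ) * ((∑ i, (ω i) ^ 2 * G2 i t : ℝ) : ℂ))) :
    (∀ ω, φ 0 ω = φ₀ ω) ∧
    ∀ t ω, HasDerivAt (fun s => φ s ω)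
      ((∑ i, ((ω i * f i t : ℝ) : ℂ) * pderivC (φ t) i ω)
        - (1 / 2 : ℂ) * ((∑ i, (ω i) ^ 2 * (g i t) ^ 2 : ℝ) : ℂ) * φ t ω) t := by
  have hFb_deriv : ∀ i t, HasDerivAt (Fb i) (f i t * Fb i t) t := fun i t => by
    rw [funext (hFb i)]
    exact hasDerivAt_exp_integral (hf i) 0 t
  have hG2_deriv : ∀ i t, HasDerivAt (G2 i) (2 * f i t * G2 i t + g i t ^ 2) t := fun i t => by
    have hFb₀ : ∀ t, Fb i t ≠ 0 := fun t => by rw [hFb]; positivity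
    have h := hasDerivAt_sq_mul_integral_div_sq (hFb_deriv i) hFb₀ ((hg i).fun_pow 2) 0 t
    rwa [← funext (hG2 i), ← hG2 i t] at h
  have hφt : ∀ t, φ t = dampedDilation φ₀ (Fb · t) (G2 · t) := fun t => funext (hφ t)
  refine ⟨fun ω => by simp [hφ, hFb, hG2], fun t ω => ?_⟩
  have hφ₀' : Differentiable ℝ φ₀ := hφ₀.differentiable one_ne_zero
  rw [sum_mul_pderivC, hφt, fderiv_dampedDilation_apply hφ₀']
  simp only [hφt]
  refine (hasDerivAt_dampedDilation_param (ω := ω) (hφ₀' _) (hasDerivAt_pi.2 (hFb_deriv · t))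
    (hasDerivAt_pi.2 (hG2_deriv · t))).congr_deriv ?_
  have hv : (fun i => f i t * Fb i t * ω i) = fun i => Fb i t * (ω i * f i t) := by
    ext; ring
  have hsum : ∑ i, ω i ^ 2 * (2 * f i t * G2 i t + g i t ^ 2) =
      ∑ i, 2 * ω i * (ω i * f i t) * G2 i t + ∑ i, ω i ^ 2 * g i t ^ 2 := by
    rw [← Finset.sum_add_distrib]
    exact Finset.sum_congr rfl fun i _ => by ring
  rw [hv, hsum]
  push_cast
  ring
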